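/- For all t > 0 and all f ∈ H¹(ℝ²), one has ‖e^{tΔ}f‖_{L^∞(ℝ²)} ≤ (2π)^{-1/2} (log(e + 1/t))^{1/2} ‖f‖_{H¹(ℝ²)}. -/

import Mathlib

open MeasureTheory Real Set

noncomputable section

abbrev R2 := EuclideanSpace ℝ (Fin 2)

/-- Fourier transform on ℝ² with normalization (2π)⁻¹ ∫ e^{-ix·ξ} f(x) dx. -/
def FT (f : R2 → ℂ) (ξ : R2) : ℂ :=
  (1 / (2 * (π : ℂ))) * ∫ x : R2, Complex.exp (-Complex.I * ((inner ℝ x ξ : ℝ) : ℂ)) * f x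

/-- Inverse Fourier transform. -/
def invFT (g : R2 → ℂ) (x : R2) : ℂ :=
  (1 / (2 * (π : ℂ))) * ∫ ξ : R2, Complex.exp (Complex.I * ((inner ℝ x ξ : ℝ) : ℂ)) * g ξ

/-- Heat semigroup e^{tΔ} = 𝓕⁻¹ e^{-t|ξ|²} 𝓕. -/
def heat (t : ℝ) (f : R2 → ℂ) : R2 → ℂ :=
  invFT (fun ξ => Complex.exp (-(t : ℂ) * (‖ξ‖ : ℂ) ^ 2) * FT f ξ)

/-- H¹ norm via the Fourier transform. -/
def H1norm (f : R2 → ℂ) : ℝ :=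
  (∫ ξ : R2, (1 + ‖ξ‖ ^ 2) * ‖FT f ξ‖ ^ 2) ^ (1 / 2 : ℝ)

/-- Membership in H¹(ℝ²). -/
def MemH1 (f : R2 → ℂ) : Prop :=
  MemLp f 2 volume ∧ Integrable (fun ξ : R2 => (1 + ‖ξ‖ ^ 2) * ‖FT f ξ‖ ^ 2)

/-- Exponential integral E₁. -/
def E1 (τ : ℝ) : ℝ := ∫ ρ in Ioi τ, Real.exp (-ρ) / ρ

/-!
Pointwise, `|e^{tΔ}f(x)| ≤ (2π)⁻¹ ∫ e^{-t|ξ|²} |𝓕f(ξ)| dξ`. Cauchy–Schwarz against the weight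
`1 + |ξ|²` bounds this by `(2π)⁻¹ (∫ e^{-2t|ξ|²} / (1 + |ξ|²) dξ)^{1/2} ‖f‖_{H¹}`, and in polar
coordinates the last integral is `2π ∫₀^∞ r e^{-2tr²} / (1 + r²) dr`. Splitting at `r = t^{-1/2}`,
the inner part is at most `½ log (1 + 1/t)` (drop the Gaussian) and the outer part at most `1/4`
(there `1 / (1 + r²) ≤ t / (1 + t)`); finally `½ log (1 + 1/t) + 1/4 ≤ log (e + 1/t)`.
-/

lemma integral_fun_norm_R2 (g : ℝ → ℝ) :
    ∫ ξ : R2, g ‖ξ‖ = 2 * π * ∫ y in Ioi (0 : ℝ), y * g y := by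
  have hball : volume.real (Metric.ball (0 : R2) 1) = π := by
    simp [measureReal_def, EuclideanSpace.volume_ball, Real.sq_sqrt pi_nonneg, one_add_one_eq_two,
      pi_nonneg]
  rw [integral_fun_norm_addHaar volume g, finrank_euclideanSpace_fin, hball]
  simp [smul_eq_mul, mul_assoc]

lemma integrable_fun_norm_R2 {g : ℝ → ℝ} :
    Integrable (fun ξ : R2 => g ‖ξ‖) ↔ IntegrableOn (fun y => y * g y) (Ioi 0) := by
  simpa using integrable_fun_norm_addHaar (volume : Measure R2) (f := g)

lemma integrable_mul_exp_neg_mul_sq_div_one_add_sq {b : ℝ} (hb : 0 < b) :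
    Integrable fun y : ℝ => y * (exp (-b * y ^ 2) / (1 + y ^ 2)) := by
  refine (integrable_mul_exp_neg_mul_sq hb).mono (by fun_prop) (.of_forall fun y => ?_)
  rw [← mul_div_assoc, norm_div, Real.norm_of_nonneg (by positivity : (0 : ℝ) ≤ 1 + y ^ 2)]
  exact div_le_self (norm_nonneg _) (by nlinarith)

lemma integral_Ioc_div_one_add_sq {R : ℝ} (hR : 0 ≤ R) :
    ∫ y in Ioc 0 R, y / (1 + y ^ 2) = log (1 + R ^ 2) / 2 := by
  have hderiv (y : ℝ) : HasDerivAt (fun y => log (1 + y ^ 2) / 2) (y / (1 + y ^ 2)) y := by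
    refine ((((hasDerivAt_pow 2 y).const_add 1).log (by positivity)).div_const 2).congr_deriv ?_
    field_simp
    ring
  rw [← intervalIntegral.integral_of_le hR,
    intervalIntegral.integral_eq_sub_of_hasDerivAt (fun y _ => hderiv y)
      ((continuous_id.div (by fun_prop) fun y => by positivity).intervalIntegrable _ _)]
  simp

lemma integral_Ioi_mul_exp_neg_mul_sq {b : ℝ} (hb : 0 < b) (R : ℝ) :
    ∫ y in Ioi R, y * exp (-b * y ^ 2) = exp (-b * R ^ 2) / (2 * b) := by
  have hderiv (y : ℝ) :
      HasDerivAt (fun y => -(2 * b)⁻¹ * exp (-b * y ^ 2)) (y * exp (-b * y ^ 2)) y := by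
    refine (((hasDerivAt_pow 2 y).const_mul (-b)).exp.const_mul _).congr_deriv ?_
    field_simp
    ring
  have hlim : Filter.Tendsto (fun y => -(2 * b)⁻¹ * exp (-b * y ^ 2)) Filter.atTop
      (nhds (-(2 * b)⁻¹ * 0)) :=
    (tendsto_exp_atBot.comp ((Filter.tendsto_pow_atTop two_ne_zero).const_mul_atTop_of_neg
      (neg_lt_zero.2 hb))).const_mul _
  rw [integral_Ioi_of_hasDerivAt_of_tendsto' (fun y _ => hderiv y)
    (integrable_mul_exp_neg_mul_sq hb).integrableOn hlim]
  ring

lemma integral_Ioi_mul_exp_neg_mul_sq_div_one_add_sq_le {b R : ℝ} (hb : 0 < b) (hR : 0 ≤ R) :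
    ∫ y in Ioi 0, y * (exp (-b * y ^ 2) / (1 + y ^ 2)) ≤
      log (1 + R ^ 2) / 2 + 1 / (2 * b * (1 + R ^ 2)) := by
  have hint := integrable_mul_exp_neg_mul_sq_div_one_add_sq hb
  have hhead : ∫ y in Ioc 0 R, y * (exp (-b * y ^ 2) / (1 + y ^ 2)) ≤ log (1 + R ^ 2) / 2 := by
    rw [← integral_Ioc_div_one_add_sq hR]
    refine setIntegral_mono_on hint.integrableOn
      ((continuous_id.div (by fun_prop) fun y => by positivity).integrableOn_Ioc)
      measurableSet_Ioc fun y hy => ?_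
    rw [← mul_div_assoc]
    gcongr
    exact mul_le_of_le_one_right hy.1.le (exp_le_one_iff.2 (by nlinarith [hb.le]))
  have htail : ∫ y in Ioi R, y * (exp (-b * y ^ 2) / (1 + y ^ 2)) ≤
      1 / (2 * b * (1 + R ^ 2)) := calc
    _ ≤ ∫ y in Ioi R, (1 + R ^ 2)⁻¹ * (y * exp (-b * y ^ 2)) := by
      refine setIntegral_mono_on hint.integrableOn
        ((integrable_mul_exp_neg_mul_sq hb).const_mul _).integrableOn measurableSet_Ioi
        fun y (hy : R < y) => ?_
      rw [mul_div_assoc', div_eq_inv_mul]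
      gcongr
      exact mul_nonneg (hR.trans hy.le) (exp_pos _).le
    _ = (1 + R ^ 2)⁻¹ * (exp (-b * R ^ 2) / (2 * b)) := by
      rw [integral_const_mul, integral_Ioi_mul_exp_neg_mul_sq hb]
    _ ≤ (1 + R ^ 2)⁻¹ * (1 / (2 * b)) := by
      gcongr
      exact exp_le_one_iff.2 (by nlinarith)
    _ = 1 / (2 * b * (1 + R ^ 2)) := by field_simp
  rw [← Ioc_union_Ioi_eq_Ioi hR,
    setIntegral_union (Ioc_disjoint_Ioi le_rfl) measurableSet_Ioi hint.integrableOn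
      hint.integrableOn]
  exact add_le_add hhead htail

lemma integrable_exp_neg_mul_sq_norm_div_one_add_sq {b : ℝ} (hb : 0 < b) :
    Integrable fun ξ : R2 => exp (-b * ‖ξ‖ ^ 2) / (1 + ‖ξ‖ ^ 2) :=
  integrable_fun_norm_R2.2 (integrable_mul_exp_neg_mul_sq_div_one_add_sq hb).integrableOn

lemma integral_exp_neg_mul_sq_norm_div_one_add_sq_le {t : ℝ} (ht : 0 < t) :
    ∫ ξ : R2, exp (-(2 * t) * ‖ξ‖ ^ 2) / (1 + ‖ξ‖ ^ 2) ≤ 2 * π * log (exp 1 + 1 / t) := by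
  have hR : (√(1 / t)) ^ 2 = 1 / t := sq_sqrt (by positivity)
  have hbound := integral_Ioi_mul_exp_neg_mul_sq_div_one_add_sq_le (by positivity : 0 < 2 * t)
    (sqrt_nonneg (1 / t))
  rw [hR] at hbound
  have hlog : log (1 + 1 / t) ≤ log (exp 1 + 1 / t) :=
    log_le_log (by positivity) (by linarith [add_one_le_exp 1])
  have hone : 1 ≤ log (exp 1 + 1 / t) := by
    rw [← log_exp 1]
    exact log_le_log (exp_pos 1) (by simp [ht.le])
  have hsmall : 1 / (2 * (2 * t) * (1 + 1 / t)) ≤ 1 / 2 := by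
    rw [div_le_div_iff₀ (by positivity) two_pos]
    field_simp
    linarith
  rw [integral_fun_norm_R2 fun y => exp (-(2 * t) * y ^ 2) / (1 + y ^ 2)]
  gcongr
  linarith

lemma integral_mul_sqrt_le {α : Type*} [MeasurableSpace α] {μ : Measure α} {g w : α → ℝ}
    (hg0 : 0 ≤ g) (hg : MemLp g 2 μ) (hw0 : 0 ≤ w) (hw : Integrable w μ) :
    ∫ a, g a * √(w a) ∂μ ≤ √(∫ a, g a ^ 2 ∂μ) * √(∫ a, w a ∂μ) := by
  have hsqrt : MemLp (fun a => √(w a)) 2 μ := by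
    refine (memLp_two_iff_integrable_sq
      (continuous_sqrt.comp_aestronglyMeasurable hw.aestronglyMeasurable)).2 ?_
    simpa only [sq_sqrt (hw0 _)] using hw
  have h := integral_mul_le_Lp_mul_Lq_of_nonneg Real.HolderConjugate.two_two (.of_forall hg0)
    (.of_forall fun a => sqrt_nonneg (w a)) (by simpa using hg) (by simpa using hsqrt)
  simp only [rpow_two, sq_sqrt (hw0 _)] at h
  simpa only [sqrt_eq_rpow] using h

lemma norm_invFT_le (g : R2 → ℂ) (x : R2) : ‖invFT g x‖ ≤ (2 * π)⁻¹ * ∫ ξ, ‖g ξ‖ := by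
  have hunit (ξ : R2) : ‖Complex.exp (Complex.I * ((inner ℝ x ξ : ℝ) : ℂ))‖ = 1 := by
    rw [Complex.norm_exp]
    simp
  rw [invFT, norm_mul]
  gcongr
  · simp [abs_of_pos pi_pos]
  · refine (norm_integral_le_integral_norm _).trans_eq ?_
    simp only [norm_mul, hunit, one_mul]

lemma eLpNorm_heat_le (t : ℝ) (f : R2 → ℂ) :
    eLpNorm (heat t f) ⊤ volume ≤
      ENNReal.ofReal ((2 * π)⁻¹ * ∫ ξ : R2, exp (-t * ‖ξ‖ ^ 2) * ‖FT f ξ‖) := by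
  have hmult (ξ : R2) : ‖Complex.exp (-(t : ℂ) * (‖ξ‖ : ℂ) ^ 2)‖ = exp (-t * ‖ξ‖ ^ 2) := by
    rw [Complex.norm_exp]
    norm_cast
  rw [eLpNorm_exponent_top]
  refine eLpNormEssSup_le_of_ae_bound (.of_forall fun x => (norm_invFT_le _ x).trans_eq ?_)
  simp only [norm_mul, hmult]

lemma integral_exp_neg_mul_sq_norm_mul_norm_FT_le {t : ℝ} (ht : 0 < t) {f : R2 → ℂ}
    (hf : Integrable fun ξ : R2 => (1 + ‖ξ‖ ^ 2) * ‖FT f ξ‖ ^ 2) :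
    ∫ ξ : R2, exp (-t * ‖ξ‖ ^ 2) * ‖FT f ξ‖ ≤
      √(∫ ξ : R2, exp (-(2 * t) * ‖ξ‖ ^ 2) / (1 + ‖ξ‖ ^ 2)) * H1norm f := by
  set g : R2 → ℝ := fun ξ => exp (-t * ‖ξ‖ ^ 2) / √(1 + ‖ξ‖ ^ 2)
  have hg_sq (ξ : R2) : g ξ ^ 2 = exp (-(2 * t) * ‖ξ‖ ^ 2) / (1 + ‖ξ‖ ^ 2) := by
    rw [div_pow, sq_sqrt (by positivity), ← exp_nat_mul]
    ring_nf
  have hg_mul (ξ : R2) :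
      g ξ * √((1 + ‖ξ‖ ^ 2) * ‖FT f ξ‖ ^ 2) = exp (-t * ‖ξ‖ ^ 2) * ‖FT f ξ‖ := by
    have hpos : 0 < √(1 + ‖ξ‖ ^ 2) := sqrt_pos.2 (by positivity)
    rw [sqrt_mul (by positivity), sqrt_sq (norm_nonneg _), ← mul_assoc,
      div_mul_cancel₀ _ hpos.ne']
  have hg : MemLp g 2 volume := by
    refine (memLp_two_iff_integrable_sq (by fun_prop)).2 ?_
    simpa only [hg_sq] using integrable_exp_neg_mul_sq_norm_div_one_add_sq (by positivity)
  have h := integral_mul_sqrt_le (fun ξ => by positivity) hg (fun ξ => by positivity) hf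
  simp only [hg_mul, hg_sq] at h
  rwa [H1norm, ← sqrt_eq_rpow]

theorem stmt8 (t : ℝ) (ht : 0 < t) (f : R2 → ℂ) (hf : MemH1 f) :
    eLpNorm (heat t f) ⊤ volume ≤
      ENNReal.ofReal ((2 * π) ^ (-(1 / 2 : ℝ)) *
        Real.sqrt (Real.log (Real.exp 1 + 1 / t)) * H1norm f) := by
  set L := log (exp 1 + 1 / t)
  have hH1 : 0 ≤ H1norm f := rpow_nonneg (integral_nonneg fun _ => by positivity) _
  have hconst : (2 * π)⁻¹ * √(2 * π * L) = (2 * π) ^ (-(1 / 2 : ℝ)) * √L := by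
    rw [sqrt_mul (by positivity), ← mul_assoc, sqrt_eq_rpow, ← rpow_neg_one,
      ← rpow_add (by positivity)]
    norm_num
  calc eLpNorm (heat t f) ⊤ volume
      ≤ ENNReal.ofReal ((2 * π)⁻¹ * ∫ ξ : R2, exp (-t * ‖ξ‖ ^ 2) * ‖FT f ξ‖) :=
        eLpNorm_heat_le t f
    _ ≤ ENNReal.ofReal ((2 * π)⁻¹ * (√(2 * π * L) * H1norm f)) := by
        gcongr
        refine (integral_exp_neg_mul_sq_norm_mul_norm_FT_le ht hf.2).trans ?_
        gcongr
        exact integral_exp_neg_mul_sq_norm_div_one_add_sq_le ht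
    _ = _ := by rw [← mul_assoc, hconst]
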